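/- arXiv:2404.02777 — 4 statements merged into one kernel-verified Lean document; each statement's English description precedes it below -/
import Mathlib

section
/- Every periodic square matrix over a field can be written as the sum of an idempotent matrix and a torsion matrix (an invertible matrix of finite multiplicative order). -/
/-!
By Fitting's lemma a periodic endomorphism `a` of a finite-dimensional space is, for `n` large,
nilpotent on `ker (a ^ n)` and of finite order on the complementary `range (a ^ n)`. A nilpotent
endomorphism is a direct sum of shifts, and a shift `b₀ ↦ b₁ ↦ ⋯ ↦ b_d ↦ 0` becomes of finite
order after subtracting the rank-one idempotent `x ↦ x_d • (b₀ + ⋯ + b_d)`. Decompositions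
"idempotent + finite order" glue along invariant direct sums.
-/

open Module LinearMap Submodule Finset

def IsIdempotentAddTorsion {R : Type*} [Semiring R] (x : R) : Prop :=
  ∃ e t : R, IsIdempotentElem e ∧ IsOfFinOrder t ∧ x = e + t

namespace IsIdempotentAddTorsion

variable {R S : Type*} [Semiring R] [Semiring S]

theorem of_isOfFinOrder {x : R} (hx : IsOfFinOrder x) : IsIdempotentAddTorsion x :=
  ⟨0, x, .zero, hx, (zero_add x).symm⟩

theorem of_subsingleton [Subsingleton R] (x : R) : IsIdempotentAddTorsion x :=
  of_isOfFinOrder (Subsingleton.elim 1 x ▸ IsOfFinOrder.one)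

theorem map {G : Type*} [FunLike G R S] [RingHomClass G R S] (f : G) {x : R}
    (hx : IsIdempotentAddTorsion x) : IsIdempotentAddTorsion (f x) := by
  obtain ⟨e, t, he, ht, rfl⟩ := hx
  exact ⟨f e, f t, he.map f, (MonoidHomClass.toMonoidHom f).isOfFinOrder ht, map_add f e t⟩

theorem prodMk {x : R} {y : S} (hx : IsIdempotentAddTorsion x) (hy : IsIdempotentAddTorsion y) :
    IsIdempotentAddTorsion (x, y) := by
  obtain ⟨e, t, he, ht, rfl⟩ := hx
  obtain ⟨e', t', he', ht', rfl⟩ := hy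
  exact ⟨(e, e'), (t, t'), Prod.ext he he', ht.prod_mk ht', rfl⟩

end IsIdempotentAddTorsion

theorem pow_add_sub_eq_of_pow_eq_pow {M : Type*} [Monoid M] {a : M} {m k n : ℕ}
    (h : a ^ m = a ^ k) (hkm : k ≤ m) (hkn : k ≤ n) : a ^ (n + (m - k)) = a ^ n := by
  rw [show n + (m - k) = n - k + m by omega, pow_add, h, ← pow_add, Nat.sub_add_cancel hkn]

theorem Submodule.conjAlgEquiv_prodEquivOfIsCompl_prodMap_restrict {R M : Type*} [CommRing R]
    [AddCommGroup M] [Module R M] {p q : Submodule R M} (h : IsCompl p q) (f : Module.End R M)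
    (hp : ∀ x ∈ p, f x ∈ p) (hq : ∀ x ∈ q, f x ∈ q) :
    (p.prodEquivOfIsCompl q h).conjAlgEquiv R (prodMap (f.restrict hp) (f.restrict hq)) = f := by
  ext x
  obtain ⟨y, rfl⟩ := (p.prodEquivOfIsCompl q h).surjective x
  simp [map_add]

theorem LinearMap.isCompl_range_ker_of_injective_comp {F K V : Type*} [Field F]
    [AddCommGroup K] [Module F K] [FiniteDimensional F K] [AddCommGroup V] [Module F V]
    (Φ : K →ₗ[F] V) (Ψ : V →ₗ[F] K) (h : Function.Injective (Ψ ∘ₗ Φ)) :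
    IsCompl (range Φ) (ker Ψ) := by
  refine ⟨Submodule.disjoint_def.mpr ?_, codisjoint_iff.mpr (eq_top_iff.mpr fun x _ => ?_)⟩
  · rintro _ ⟨c, rfl⟩ hc
    rw [show c = 0 from h (by simpa using hc), map_zero]
  · obtain ⟨c, hc⟩ := LinearMap.injective_iff_surjective.mp h (Ψ x)
    refine mem_sup.mpr ⟨Φ c, ⟨c, rfl⟩, x - Φ c, ?_, add_sub_cancel _ _⟩
    simpa [sub_eq_zero] using hc.symm

namespace Module.End

section CommRing

variable {R M : Type*} [CommRing R] [AddCommGroup M] [Module R M]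

theorem isIdempotentAddTorsion_of_isCompl {f : Module.End R M} {p q : Submodule R M}
    (h : IsCompl p q) (hp : ∀ x ∈ p, f x ∈ p) (hq : ∀ x ∈ q, f x ∈ q)
    (hfp : IsIdempotentAddTorsion (f.restrict hp)) (hfq : IsIdempotentAddTorsion (f.restrict hq)) :
    IsIdempotentAddTorsion f := by
  rw [← p.conjAlgEquiv_prodEquivOfIsCompl_prodMap_restrict h f hp hq]
  exact ((hfp.prodMk hfq).map (prodMapAlgHom R p q)).map _

theorem pow_eq_one_of_geom_sum_apply_eq_zero {t : Module.End R M} {v : M}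
    (hspan : span R (Set.range fun i : ℕ => (t ^ i) v) = ⊤) {s : ℕ}
    (hv : (∑ i ∈ range s, t ^ i) v = 0) : t ^ s = 1 := by
  have hS : ∑ i ∈ range s, t ^ i = 0 := by
    refine LinearMap.ker_eq_top.mp (top_le_iff.mp (hspan ▸ span_le.mpr ?_))
    rintro _ ⟨i, rfl⟩
    have hcomm : Commute (∑ i ∈ range s, t ^ i) (t ^ i) :=
      .sum_left _ _ _ fun j _ => (Commute.refl t).pow_pow j i
    rw [SetLike.mem_coe, LinearMap.mem_ker, ← mul_apply, hcomm.eq, mul_apply, hv, map_zero]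
  rw [← sub_eq_zero, ← geom_sum_mul, hS, zero_mul]

theorem isIdempotentAddTorsion_of_basis_pow {d : ℕ} (g : Module.End R M)
    (b : Basis (Fin (d + 1)) R M) (hb : ∀ i : Fin (d + 1), b i = (g ^ (i : ℕ)) (b 0))
    (hv : (g ^ (d + 1)) (b 0) = 0) : IsIdempotentAddTorsion g := by
  set u := ∑ i, b i
  set e : Module.End R M := (b.coord (Fin.last d)).smulRight u
  -- In the basis `b`, `g - e` is the companion matrix of `1 + X + ⋯ + X ^ (d + 1)`.
  have hcoord : ∀ i, b.coord (Fin.last d) (b i) = if i = Fin.last d then 1 else 0 := fun i => by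
    simp [Finsupp.single_apply]
  have he : IsIdempotentElem e := by
    ext x
    simp [e, u, map_sum, hcoord]
  set t := g - e
  have ht : ∀ x, t x = g x - b.coord (Fin.last d) x • u := fun x => rfl
  have hg : ∀ i : Fin (d + 1), g (b i) = (g ^ ((i : ℕ) + 1)) (b 0) := fun i => by
    rw [hb i, ← mul_apply, ← pow_succ']
  have horbit : ∀ i : Fin (d + 1), (t ^ (i : ℕ)) (b 0) = b i := by
    refine Fin.induction (by simp) fun i ih => ?_
    rw [Fin.val_succ, pow_succ', mul_apply, ← Fin.val_castSucc, ih, ht, hg, hcoord,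
      if_neg (Fin.castSucc_ne_last i), zero_smul, sub_zero, hb i.succ, Fin.val_succ,
      Fin.val_castSucc]
  have hlast : (t ^ (d + 1)) (b 0) = -u := by
    have := horbit (Fin.last d)
    rw [Fin.val_last] at this
    rw [pow_succ', mul_apply, this, ht, hg, hcoord, if_pos rfl, Fin.val_last, hv, one_smul,
      zero_sub]
  refine ⟨e, t, he, isOfFinOrder_iff_pow_eq_one.mpr ⟨d + 2, by omega, ?_⟩, by simp [t]⟩
  refine pow_eq_one_of_geom_sum_apply_eq_zero (v := b 0) ?_ ?_
  · refine eq_top_iff.mpr (b.span_eq ▸ span_mono ?_)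
    rintro _ ⟨i, rfl⟩
    exact ⟨i, horbit i⟩
  · rw [sum_range_succ, LinearMap.add_apply, hlast, LinearMap.sum_apply,
      ← Fin.sum_univ_eq_sum_range (fun i => (t ^ i) (b 0)), add_neg_eq_zero]
    simp only [horbit, u]

end CommRing

section Cyclic

variable {F V : Type*} [Field F] [AddCommGroup V] [Module F V] {g : Module.End F V} {v : V}
  {φ : Module.Dual F V} {d : ℕ}

theorem eq_zero_of_dual_pow_apply_sum_eq_zero (hv : (g ^ (d + 1)) v = 0)
    (hφ : φ ((g ^ d) v) ≠ 0) {c : Fin (d + 1) → F}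
    (hc : ∀ j : Fin (d + 1), φ ((g ^ (j : ℕ)) (∑ i, c i • (g ^ (i : ℕ)) v)) = 0) : c = 0 := by
  by_contra hne
  obtain ⟨a, ha, hmin⟩ := wellFounded_lt.has_min {i | c i ≠ 0} (Function.ne_iff.mp hne)
  -- Only the term `i = a` survives: earlier coefficients vanish, later powers of `g` kill `v`.
  have hsingle : φ ((g ^ (a.rev : ℕ)) (∑ i, c i • (g ^ (i : ℕ)) v)) = c a * φ ((g ^ d) v) := by
    simp only [map_sum, map_smul, smul_eq_mul, ← mul_apply, ← pow_add]
    rw [Finset.sum_eq_single a]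
    · rw [Fin.val_rev, show d + 1 - (a + 1) + a = d by omega]
    · intro i _ hia
      rcases lt_or_gt_of_ne hia with hlt | hgt
      · rw [not_not.mp fun h => hmin i h hlt, zero_mul]
      · rw [pow_map_zero_of_le (by rw [Fin.val_rev]; omega) hv, map_zero, mul_zero]
    · simp
  exact mul_ne_zero ha hφ (hsingle ▸ hc a.rev)

theorem linearIndependent_pow_apply (hv : (g ^ (d + 1)) v = 0) (hφ : φ ((g ^ d) v) ≠ 0) :
    LinearIndependent F fun i : Fin (d + 1) => (g ^ (i : ℕ)) v :=
  Fintype.linearIndependent_iff.mpr fun c hc =>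
    congrFun (eq_zero_of_dual_pow_apply_sum_eq_zero hv hφ fun j => by rw [hc, map_zero, map_zero])

theorem isCompl_span_pow_apply_iInf_ker (hv : (g ^ (d + 1)) v = 0) (hφ : φ ((g ^ d) v) ≠ 0) :
    IsCompl (span F (Set.range fun i : Fin (d + 1) => (g ^ (i : ℕ)) v))
      (⨅ j : Fin (d + 1), ker (φ ∘ₗ g ^ (j : ℕ))) := by
  rw [← Fintype.range_linearCombination, ← ker_pi]
  refine isCompl_range_ker_of_injective_comp _ _ ((injective_iff_map_eq_zero _).mpr fun c hc => ?_)
  refine eq_zero_of_dual_pow_apply_sum_eq_zero hv hφ fun j => ?_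
  simpa [Fintype.linearCombination_apply] using congrFun hc j

theorem mapsTo_span_pow_apply (hv : (g ^ (d + 1)) v = 0) :
    ∀ x ∈ span F (Set.range fun i : Fin (d + 1) => (g ^ (i : ℕ)) v),
      g x ∈ span F (Set.range fun i : Fin (d + 1) => (g ^ (i : ℕ)) v) := by
  refine fun x hx => (span_le (p := (span F _).comap g)).mpr ?_ hx
  rintro _ ⟨i, rfl⟩
  rw [SetLike.mem_coe, mem_comap, ← mul_apply, ← pow_succ']
  rcases lt_or_ge ((i : ℕ) + 1) (d + 1) with hi | hi
  · exact subset_span ⟨⟨i + 1, hi⟩, rfl⟩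
  · rw [pow_map_zero_of_le hi hv]
    exact zero_mem _

theorem mapsTo_iInf_ker_dual_pow (hg : g ^ (d + 1) = 0) :
    ∀ x ∈ ⨅ j : Fin (d + 1), ker (φ ∘ₗ g ^ (j : ℕ)),
      g x ∈ ⨅ j : Fin (d + 1), ker (φ ∘ₗ g ^ (j : ℕ)) := by
  simp only [mem_iInf, mem_ker, comp_apply]
  intro x hx j
  rw [← mul_apply, ← pow_succ]
  rcases lt_or_ge ((j : ℕ) + 1) (d + 1) with hj | hj
  · exact hx ⟨j + 1, hj⟩
  · rw [pow_eq_zero_of_le hj hg, LinearMap.zero_apply, map_zero]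

theorem isIdempotentAddTorsion_restrict_span_pow_apply (hv : (g ^ (d + 1)) v = 0)
    (hφ : φ ((g ^ d) v) ≠ 0) :
    IsIdempotentAddTorsion (g.restrict (mapsTo_span_pow_apply hv)) := by
  set b := Basis.span (linearIndependent_pow_apply hv hφ)
  have hpow : ∀ (n : ℕ) (x), ((g.restrict (mapsTo_span_pow_apply hv) ^ n) x : V) = (g ^ n) x :=
    fun n x => by rw [pow_restrict, coe_restrict_apply]
  refine isIdempotentAddTorsion_of_basis_pow _ b (fun i => Subtype.ext ?_) (Subtype.ext ?_)
  · simp [b, Basis.span_apply, hpow]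
  · simp [b, Basis.span_apply, hpow, hv]

end Cyclic

variable {F V : Type*} [Field F] [AddCommGroup V] [Module F V] [FiniteDimensional F V]

theorem isIdempotentAddTorsion_of_isNilpotent {g : Module.End F V} (hg : IsNilpotent g) :
    IsIdempotentAddTorsion g := by
  induction h : finrank F V using Nat.strong_induction_on generalizing V with
  | _ r ih =>
  cases subsingleton_or_nontrivial V
  · exact .of_subsingleton g
  set d := nilpotencyClass g - 1
  have hd : nilpotencyClass g = d + 1 :=
    (Nat.succ_pred_eq_of_pos (pos_nilpotencyClass_iff.mpr hg)).symm
  have hgd : g ^ (d + 1) = 0 := hd ▸ pow_nilpotencyClass hg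
  obtain ⟨v, hv⟩ : ∃ v, (g ^ d) v ≠ 0 := not_forall.mp fun h =>
    pow_pred_nilpotencyClass hg (LinearMap.ext h)
  obtain ⟨φ, hφ⟩ := Module.Projective.exists_dual_ne_zero F hv
  -- The orbit of `v` spans a cyclic summand of maximal length, and the functionals
  -- `φ ∘ g ^ j` cut out an invariant complement.
  have hgv : (g ^ (d + 1)) v = 0 := by rw [hgd, LinearMap.zero_apply]
  have hcompl := isCompl_span_pow_apply_iInf_ker hgv hφ
  have hWdim := finrank_span_eq_card (linearIndependent_pow_apply hgv hφ)
  have hWU := Submodule.finrank_add_eq_of_isCompl hcompl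
  refine isIdempotentAddTorsion_of_isCompl hcompl (mapsTo_span_pow_apply hgv)
    (mapsTo_iInf_ker_dual_pow hgd) (isIdempotentAddTorsion_restrict_span_pow_apply hgv hφ)
    (ih _ ?_ (isNilpotent.restrict _ hg) rfl)
  rw [Fintype.card_fin] at hWdim
  omega

theorem isIdempotentAddTorsion_of_pow_eq_pow {a : Module.End F V} {m k : ℕ} (hkm : k < m)
    (h : a ^ m = a ^ k) : IsIdempotentAddTorsion a := by
  obtain ⟨n, hcompl, hkn⟩ :=
    (a.eventually_isCompl_ker_pow_range_pow.and (Filter.eventually_ge_atTop k)).exists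
  have hcomm : a ^ n * a = a * a ^ n := (Commute.self_pow a n).eq.symm
  have hker : ∀ x ∈ ker (a ^ n), a x ∈ ker (a ^ n) := fun x hx => by
    rw [mem_ker, ← mul_apply, hcomm, mul_apply, mem_ker.mp hx, map_zero]
  have hrange : ∀ x ∈ range (a ^ n), a x ∈ range (a ^ n) := by
    rintro _ ⟨y, rfl⟩
    exact ⟨a y, by rw [← mul_apply, hcomm, mul_apply]⟩
  refine isIdempotentAddTorsion_of_isCompl hcompl hker hrange
    (isIdempotentAddTorsion_of_isNilpotent ⟨n, ?_⟩)
    (.of_isOfFinOrder (isOfFinOrder_iff_pow_eq_one.mpr ⟨m - k, by omega, ?_⟩))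
  · refine LinearMap.ext fun x => Subtype.ext ?_
    rw [pow_restrict, coe_restrict_apply, LinearMap.zero_apply, ZeroMemClass.coe_zero]
    exact mem_ker.mp x.2
  · refine LinearMap.ext fun ⟨_, y, hy⟩ => Subtype.ext ?_
    simp [pow_restrict, ← hy, ← mul_apply, ← pow_add, add_comm (m - k),
      pow_add_sub_eq_of_pow_eq_pow h hkm.le hkn]

end Module.End

/-- Every periodic square matrix over a field is the sum of an idempotent
matrix and a torsion matrix. -/
theorem periodic_eq_idempotent_add_torsion
    {F : Type*} [Field F] {n : ℕ} (A : Matrix (Fin n) (Fin n) F)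
    (hA : ∃ m k : ℕ, 1 ≤ k ∧ k < m ∧ A ^ m = A ^ k) :
    ∃ E T : Matrix (Fin n) (Fin n) F,
      IsIdempotentElem E ∧ IsUnit T ∧ (∃ s : ℕ, 1 ≤ s ∧ T ^ s = 1) ∧
      A = E + T := by
  obtain ⟨m, k, -, hkm, h⟩ := hA
  let φ : Matrix (Fin n) (Fin n) F ≃ₐ[F] Module.End F (Fin n → F) := Matrix.toLinAlgEquiv'
  have hφ : (φ A) ^ m = (φ A) ^ k := by rw [← map_pow, ← map_pow, h]
  have hA := (Module.End.isIdempotentAddTorsion_of_pow_eq_pow hkm hφ).map φ.symm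
  rw [φ.symm_apply_apply] at hA
  obtain ⟨E, T, hE, hT, rfl⟩ := hA
  obtain ⟨s, hs, hTs⟩ := isOfFinOrder_iff_pow_eq_one.mp hT
  exact ⟨E, T, hE, hT.isUnit, ⟨s, hs, hTs⟩, rfl⟩
end

section
/- The n×n nilpotent Jordan block N (with 1's on the subdiagonal and 0's elsewhere) equals the sum of the idempotent matrix E whose last column is all 1's and all other entries 0, and the companion matrix C of the polynomial x^n + x^{n-1} + ... + x + 1; moreover C^{n+1} = Id, so C is torsion. -/
/-!
Let `eₖ` be the standard basis. The companion matrix `C` of `p = 1 + x + ⋯ + xⁿ` sends `eₖ` to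
`eₖ₊₁` for `k < n - 1` and `eₙ₋₁` to `-(e₀ + ⋯ + eₙ₋₁)`, so `e₀` is a cyclic vector with
`Cᵏ e₀ = eₖ` and `p(C) e₀ = 0`. Since `(x - 1) p = xⁿ⁺¹ - 1`, also `Cⁿ⁺¹ e₀ = e₀`, and as `Cⁿ⁺¹`
commutes with every `Cᵏ` it fixes every `eₖ`. The idempotent `E` has rank one, `E = 1 · e_{n-1}ᵀ`
with `e_{n-1}ᵀ 1 = 1`.
-/

open Matrix Finset

theorem Matrix.isIdempotentElem_vecMulVec {ι R : Type*} [Fintype ι] [Semiring R]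
    {u v : ι → R} (h : v ⬝ᵥ u = 1) : IsIdempotentElem (vecMulVec u v) := by
  rw [IsIdempotentElem, vecMulVec_mul_vecMulVec, h, one_smul]

theorem Matrix.pow_eq_one_of_cyclic {ι R : Type*} [Fintype ι] [DecidableEq ι] [Semiring R]
    {A : Matrix ι ι R} {v : ι → R} {m : ℕ} (hcyc : ∀ i, ∃ k, A ^ k *ᵥ v = Pi.single i 1)
    (hv : A ^ m *ᵥ v = v) : A ^ m = 1 := by
  refine ext_of_mulVec_single fun i => ?_
  obtain ⟨k, hk⟩ := hcyc i
  rw [← hk, mulVec_mulVec, ← pow_mul_comm, ← mulVec_mulVec, hv, one_mulVec]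

section

variable {R : Type*} (n : ℕ)

-- The three matrices have size `n + 1`, so that the last index is `Fin.last n`.
def subdiagOnes [Zero R] [One R] : Matrix (Fin (n + 1)) (Fin (n + 1)) R :=
  of fun i j => if (i : ℕ) = j + 1 then 1 else 0

def lastColOnes [Semiring R] : Matrix (Fin (n + 1)) (Fin (n + 1)) R :=
  vecMulVec 1 (Pi.single (Fin.last n) 1)

def onesCompanion [Ring R] : Matrix (Fin (n + 1)) (Fin (n + 1)) R :=
  of fun i j => if j = Fin.last n then -1 else if (i : ℕ) = j + 1 then 1 else 0

theorem isIdempotentElem_lastColOnes [Semiring R] :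
    IsIdempotentElem (lastColOnes n : Matrix _ _ R) :=
  isIdempotentElem_vecMulVec (by simp)

variable [Ring R]

theorem subdiagOnes_eq_lastColOnes_add_onesCompanion :
    (subdiagOnes n : Matrix _ _ R) = lastColOnes n + onesCompanion n := by
  ext i j
  by_cases hj : j = Fin.last n
  · simp [subdiagOnes, lastColOnes, onesCompanion, hj, i.isLt.ne]
  · simp [subdiagOnes, lastColOnes, onesCompanion, hj]

variable {n}

theorem onesCompanion_mulVec_single_castSucc (j : Fin n) :
    (onesCompanion n : Matrix _ _ R) *ᵥ Pi.single j.castSucc 1 = Pi.single j.succ 1 := by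
  ext i
  simp [onesCompanion, Pi.single_apply, Fin.ext_iff, j.isLt.ne]

theorem onesCompanion_mulVec_single_last :
    (onesCompanion n : Matrix _ _ R) *ᵥ Pi.single (Fin.last n) 1 = -1 := by
  ext i
  simp [onesCompanion]

theorem onesCompanion_pow_mulVec_single_zero (k : Fin (n + 1)) :
    (onesCompanion n : Matrix _ _ R) ^ (k : ℕ) *ᵥ Pi.single 0 1 = Pi.single k 1 := by
  induction k using Fin.induction with
  | zero => rw [Fin.val_zero, pow_zero, one_mulVec]
  | succ j ih =>
    rw [Fin.val_succ, pow_succ', ← mulVec_mulVec, ← Fin.val_castSucc, ih,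
      onesCompanion_mulVec_single_castSucc]

theorem geom_sum_onesCompanion_mulVec_single_zero :
    (∑ k ∈ range (n + 2), (onesCompanion n : Matrix _ _ R) ^ k) *ᵥ Pi.single 0 1 = 0 := by
  have hlast : (onesCompanion n : Matrix _ _ R) ^ (n + 1) *ᵥ Pi.single 0 1 = -1 := by
    have hcol := onesCompanion_pow_mulVec_single_zero (R := R) (Fin.last n)
    rw [Fin.val_last] at hcol
    rw [pow_succ', ← mulVec_mulVec, hcol, onesCompanion_mulVec_single_last]
  rw [sum_range_succ, add_mulVec, sum_mulVec, hlast, ← Fin.sum_univ_eq_sum_range]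
  simp_rw [onesCompanion_pow_mulVec_single_zero]
  rw [univ_sum_single]
  exact add_neg_cancel 1

theorem onesCompanion_pow_eq_one : (onesCompanion n : Matrix _ _ R) ^ (n + 2) = 1 := by
  refine pow_eq_one_of_cyclic (v := Pi.single 0 1)
    (fun i => ⟨i, onesCompanion_pow_mulVec_single_zero i⟩) ?_
  have hfix : ((onesCompanion n : Matrix _ _ R) ^ (n + 2) - 1) *ᵥ Pi.single 0 1 = 0 := by
    rw [← mul_geom_sum, ← mulVec_mulVec, geom_sum_onesCompanion_mulVec_single_zero, mulVec_zero]
  rwa [sub_mulVec, one_mulVec, sub_eq_zero] at hfix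

end

/-- The nilpotent Jordan block `N` equals the sum of the idempotent matrix `E`
whose last column is all `1`s, and the companion matrix `C` of
`x^n + x^(n-1) + ⋯ + 1`; moreover `C ^ (n+1) = 1`. -/
theorem jordan_block_eq_idempotent_add_companion
    {F : Type*} [Field F] {n : ℕ} (hn : 1 ≤ n)
    (N E C : Matrix (Fin n) (Fin n) F)
    (hN : ∀ i j : Fin n, N i j = if (i : ℕ) = (j : ℕ) + 1 then 1 else 0)
    (hE : ∀ i j : Fin n, E i j = if (j : ℕ) = n - 1 then 1 else 0)
    (hC : ∀ i j : Fin n, C i j =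
      if (j : ℕ) = n - 1 then -1
      else if (i : ℕ) = (j : ℕ) + 1 then 1 else 0) :
    N = E + C ∧ IsIdempotentElem E ∧ C ^ (n + 1) = 1 := by
  obtain ⟨n, rfl⟩ : ∃ m, n = m + 1 := ⟨n - 1, by omega⟩
  obtain rfl : N = subdiagOnes n := Matrix.ext hN
  obtain rfl : E = lastColOnes n := by
    ext i j
    simp [hE, lastColOnes, Pi.single_apply, Fin.ext_iff]
  obtain rfl : C = onesCompanion n := by
    ext i j
    simp [hC, onesCompanion, Fin.ext_iff]
  exact ⟨subdiagOnes_eq_lastColOnes_add_onesCompanion n, isIdempotentElem_lastColOnes n,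
    onesCompanion_pow_eq_one⟩
end

section
/- For any k×k matrix T over a field, if A = [[0,0],[0,T]] (block 2k×2k matrix) and N = [[−T,−T],[T,T]], then (A − N)^6 = [[T^6, 0],[0, T^6]]. In particular, if T is torsion then A − N is torsion, so A is the sum of a torsion matrix and a square-zero matrix. -/
/-!
`A - N = [[T, T], [-T, 0]]` is `C ⊗ T` for `C = [[1, 1], [-1, 0]]`. Since `C² - C + 1 = 0`,
`C³ = -1`, so `(A - N)⁶ = diag(T⁶, T⁶)`; and `N² = 0` because `[[-1, -1], [1, 1]]` squares to zero.
-/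

open Matrix

section

variable {R : Type*} [Ring R] {m : Type*}

theorem fromBlocks_zero_zero_zero_sub_fromBlocks_neg_neg (T : Matrix m m R) :
    fromBlocks 0 0 0 T - fromBlocks (-T) (-T) T T = fromBlocks T T (-T) 0 := by
  rw [sub_eq_add_neg, fromBlocks_neg, fromBlocks_add]
  simp

variable [Fintype m] [DecidableEq m]

theorem fromBlocks_neg_neg_self_self_sq (T : Matrix m m R) :
    fromBlocks (-T) (-T) T T ^ 2 = 0 := by
  simp [sq, fromBlocks_multiply]

theorem fromBlocks_self_self_neg_zero_pow_three (T : Matrix m m R) :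
    fromBlocks T T (-T) 0 ^ 3 = -fromBlocks (T ^ 3) 0 0 (T ^ 3) := by
  rw [pow_succ, sq, fromBlocks_multiply, fromBlocks_multiply, fromBlocks_neg]
  noncomm_ring

theorem fromBlocks_self_self_neg_zero_pow_six (T : Matrix m m R) :
    fromBlocks T T (-T) 0 ^ 6 = fromBlocks (T ^ 6) 0 0 (T ^ 6) := by
  rw [show 6 = 3 * 2 from rfl, pow_mul, fromBlocks_self_self_neg_zero_pow_three, neg_sq,
    fromBlocks_diagonal_pow, ← pow_mul]

theorem fromBlocks_self_self_neg_zero_pow_six_mul_eq_one {T : Matrix m m R} {s : ℕ}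
    (hT : T ^ s = 1) : fromBlocks T T (-T) 0 ^ (6 * s) = 1 := by
  rw [pow_mul, fromBlocks_self_self_neg_zero_pow_six, fromBlocks_diagonal_pow, ← pow_mul,
    mul_comm, pow_mul, hT, one_pow, fromBlocks_one]

end

/-- If `A = [[0,0],[0,T]]` and `N = [[−T,−T],[T,T]]`, then
`(A − N)^6 = [[T^6,0],[0,T^6]]`; in particular, if `T` is torsion then
`A − N` is torsion, so `A` is a sum of a torsion matrix and a square-zero
matrix. -/
theorem block_torsion_add_squareZero
    {F : Type*} [Field F] {k : ℕ} (T : Matrix (Fin k) (Fin k) F)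
    (A N : Matrix (Fin k ⊕ Fin k) (Fin k ⊕ Fin k) F)
    (hA : A = Matrix.fromBlocks 0 0 0 T)
    (hN : N = Matrix.fromBlocks (-T) (-T) T T) :
    (A - N) ^ 6 = Matrix.fromBlocks (T ^ 6) 0 0 (T ^ 6) ∧
    ((IsUnit T ∧ ∃ s : ℕ, 1 ≤ s ∧ T ^ s = 1) →
      ∃ T' N' : Matrix (Fin k ⊕ Fin k) (Fin k ⊕ Fin k) F,
        IsUnit T' ∧ (∃ s : ℕ, 1 ≤ s ∧ T' ^ s = 1) ∧ N' ^ 2 = 0 ∧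
        A = T' + N') := by
  have hAN : A - N = fromBlocks T T (-T) 0 := by
    rw [hA, hN, fromBlocks_zero_zero_zero_sub_fromBlocks_neg_neg]
  refine ⟨hAN ▸ fromBlocks_self_self_neg_zero_pow_six T, ?_⟩
  rintro ⟨-, s, hs, hTs⟩
  have htorsion : (A - N) ^ (6 * s) = 1 :=
    hAN ▸ fromBlocks_self_self_neg_zero_pow_six_mul_eq_one hTs
  refine ⟨A - N, N, IsUnit.of_pow_eq_one htorsion (by omega), ⟨6 * s, by omega, htorsion⟩,
    hN ▸ fromBlocks_neg_neg_self_self_sq T, (sub_add_cancel A N).symm⟩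
end

section
/- There is no square-zero matrix N ∈ M_3(ℝ) such that A + N is a torsion matrix, where A is the 3×3 real matrix with rows (0,0,0), (0,0,−1), (0,1,−√2). Hence the rank condition rank(A) ≥ n/2 is not sufficient for the torsion-plus-square-zero decomposition over ℝ. -/
/-!
Since `N` is nilpotent, `trace (A + N) = trace A = -√2`. A real `3 × 3` matrix of finite order has
roots of unity as eigenvalues, and its non-real eigenvalues come in conjugate pairs. Three real
eigenvalues `±1` have an integer sum, and `1 + α + ᾱ = -√2` is impossible for `|α| = 1`, so the
eigenvalues are `-1, α, ᾱ` with `α + ᾱ = 1 - √2`, i.e. `α² = (1 - √2) α - 1`. Writing `α ^ n` as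
`p + q α` with `p, q ∈ ℤ[√2]` and applying the Galois conjugation `√2 ↦ -√2` turns `α ^ n = 1` into
`μ ^ n = 1` for the real root `μ > 1` of `X² - (1 + √2) X + 1`, which is absurd.
-/

open Polynomial

theorem exists_pow_eq_add_mul_of_sq_eq {R S S' : Type*} [CommRing R] [CommRing S] [CommRing S']
    (f : R →+* S) (g : R →+* S') (b c : R) {z : S} {w : S'}
    (hz : z ^ 2 = f b * z + f c) (hw : w ^ 2 = g b * w + g c) (n : ℕ) :
    ∃ p q : R, z ^ n = f p + f q * z ∧ w ^ n = g p + g q * w := by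
  induction n with
  | zero => exact ⟨1, 0, by simp, by simp⟩
  | succ n ih =>
    obtain ⟨p, q, hzn, hwn⟩ := ih
    refine ⟨q * c, p + q * b, ?_, ?_⟩
    · rw [pow_succ, hzn]; simp only [map_mul, map_add]; linear_combination f q * hz
    · rw [pow_succ, hwn]; simp only [map_mul, map_add]; linear_combination g q * hw

theorem exists_one_lt_sq_eq : ∃ μ : ℝ, 1 < μ ∧ μ ^ 2 = (1 + √2) * μ - 1 := by
  have h2 : √2 ^ 2 = 2 := Real.sq_sqrt zero_le_two
  have hq : √(2 * √2 - 1) ^ 2 = 2 * √2 - 1 := Real.sq_sqrt (by linarith [Real.one_lt_sqrt_two])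
  refine ⟨(1 + √2 + √(2 * √2 - 1)) / 2, ?_, by linear_combination (hq - h2) / 4⟩
  linarith [Real.one_lt_sqrt_two, Real.sqrt_nonneg (2 * √2 - 1)]

theorem Complex.pow_ne_one_of_sq_eq {z : ℂ} (hz : z ^ 2 = (1 - √2) * z - 1) (him : z.im ≠ 0)
    {n : ℕ} (hn : n ≠ 0) : z ^ n ≠ 1 := by
  intro hzn
  let f : ℤ√2 →+* ℝ := Zsqrtd.toReal zero_le_two
  have hf : Function.Injective f :=
    Zsqrtd.toReal_injective _ fun k h => Int.sq_ne_two_mod_four k (by rw [← h]; rfl)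
  obtain ⟨μ, hμ1, hμ⟩ := exists_one_lt_sq_eq
  obtain ⟨p, q, hzp, hμp⟩ := exists_pow_eq_add_mul_of_sq_eq ((algebraMap ℝ ℂ).comp f)
    (f.comp (starRingEnd _)) (1 - Zsqrtd.sqrtd) (-1) (z := z) (w := μ)
    (by simp [f, hz]; ring) (by simp [f, starRingEnd_apply, hμ]; ring) n
  rw [hzn] at hzp
  have hq : q = 0 := hf <| by
    have him' : f q * z.im = 0 := by simpa using (congrArg Complex.im hzp).symm
    simpa [him] using him'
  have hp : p = 1 := hf <| by simpa [hq] using (congrArg Complex.re hzp).symm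
  have : μ ^ n = 1 := by simpa [hp, hq] using hμp
  exact (one_lt_pow₀ hμ1 hn).ne' this

theorem Complex.eq_one_or_eq_neg_one_of_pow_eq_one {z : ℂ} (him : z.im = 0) {s : ℕ} (hs : s ≠ 0)
    (hz : z ^ s = 1) : z = 1 ∨ z = -1 := by
  obtain ⟨x, rfl⟩ : ∃ x : ℝ, (x : ℂ) = z := ⟨z.re, Complex.ext rfl him.symm⟩
  rcases (pow_eq_one_iff_of_ne_zero hs).1 (by exact_mod_cast hz : x ^ s = 1) with h | ⟨h, -⟩ <;>
    simp [h]

theorem Complex.sq_eq_two_re_mul_sub_one {z : ℂ} (hz : ‖z‖ = 1) : z ^ 2 = 2 * z.re * z - 1 := by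
  have hconj : z * (starRingEnd ℂ) z = 1 := by
    rw [Complex.mul_conj, Complex.normSq_eq_norm_sq, hz]; norm_num
  have hre : (2 * z.re : ℂ) = z + (starRingEnd ℂ) z := by
    rw [Complex.add_conj]; push_cast; ring
  rw [hre]; linear_combination -hconj

theorem Multiset.exists_eq_cons_cons_singleton {α : Type*} {m : Multiset α} (hm : card m = 3)
    {a b : α} (ha : a ∈ m) (hb : b ∈ m) (hab : b ≠ a) : ∃ c, m = a ::ₘ b ::ₘ {c} := by
  obtain ⟨t, rfl⟩ := exists_cons_of_mem ha
  obtain ⟨u, rfl⟩ := exists_cons_of_mem ((mem_cons.1 hb).resolve_left hab)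
  obtain ⟨c, rfl⟩ := card_eq_one.1 (by simpa using hm)
  exact ⟨c, rfl⟩

theorem Multiset.sum_ne_neg_sqrt_two {m : Multiset ℂ} (hcard : card m = 3)
    (hconj : ∀ z ∈ m, starRingEnd ℂ z ∈ m) {s : ℕ} (hs : s ≠ 0) (hroots : ∀ z ∈ m, z ^ s = 1) :
    m.sum ≠ -√2 := by
  intro hsum
  by_cases hreal : ∀ z ∈ m, z.im = 0
  · have hpm (z) (hz : z ∈ m) :=
      Complex.eq_one_or_eq_neg_one_of_pow_eq_one (hreal z hz) hs (hroots z hz)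
    obtain ⟨a, b, c, rfl⟩ := card_eq_three.1 hcard
    have hre := congrArg Complex.re hsum
    rcases hpm a (by simp) with rfl | rfl <;> rcases hpm b (by simp) with rfl | rfl <;>
      rcases hpm c (by simp) with rfl | rfl <;> norm_num at hre <;>
      nlinarith [Real.one_lt_sqrt_two, Real.sq_sqrt (zero_le_two : (0 : ℝ) ≤ 2)]
  push Not at hreal
  obtain ⟨α, hα, him⟩ := hreal
  obtain ⟨γ, rfl⟩ := exists_eq_cons_cons_singleton hcard hα (hconj α hα)
    (mt Complex.conj_eq_iff_im.1 him)
  have hnorm : ‖α‖ = 1 := Complex.norm_eq_one_of_pow_eq_one (hroots α (by simp)) hs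
  have hγ : γ = 1 ∨ γ = -1 := Complex.eq_one_or_eq_neg_one_of_pow_eq_one
    (by simpa using congrArg Complex.im hsum) hs (hroots γ (by simp))
  have hre : 2 * α.re + γ.re = -√2 := by simpa [two_mul, add_assoc] using congrArg Complex.re hsum
  rcases hγ with rfl | rfl
  · simp only [Complex.one_re] at hre
    linarith [abs_le.1 (hnorm ▸ Complex.abs_re_le_norm α), Real.one_lt_sqrt_two]
  · have hαre : 2 * α.re = 1 - √2 := by
      simp only [Complex.neg_re, Complex.one_re] at hre
      linarith
    have hα2 : α ^ 2 = (1 - √2) * α - 1 := by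
      rw [Complex.sq_eq_two_re_mul_sub_one hnorm]
      exact_mod_cast congrArg (fun x : ℝ => (x : ℂ) * α - 1) hαre
    exact Complex.pow_ne_one_of_sq_eq hα2 him hs (hroots α (by simp))

theorem Matrix.pow_eq_one_of_isRoot_charpoly {n K : Type*} [Fintype n] [DecidableEq n]
    [Nonempty n] [Field K] {M : Matrix n n K} {s : ℕ} (hM : M ^ s = 1) {z : K}
    (hz : M.charpoly.IsRoot z) : z ^ s = 1 := by
  have := spectrum.pow_mem_pow M s (mem_spectrum_iff_isRoot_charpoly.2 hz)
  rwa [hM, spectrum.one_eq, Set.mem_singleton_iff] at this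

theorem Matrix.trace_ne_neg_sqrt_two_of_pow_eq_one {T : Matrix (Fin 3) (Fin 3) ℝ} {s : ℕ}
    (hs : s ≠ 0) (hT : T ^ s = 1) : T.trace ≠ -√2 := by
  let Tc := (algebraMap ℝ ℂ).mapMatrix T
  have hTc : Tc ^ s = 1 := by rw [← map_pow, hT, map_one]
  have hchar : Tc.charpoly = T.charpoly.map (algebraMap ℝ ℂ) := charpoly_map T _
  have htrace : Tc.trace = T.trace := (AddMonoidHom.map_trace (algebraMap ℝ ℂ) T).symm
  intro htr
  refine Multiset.sum_ne_neg_sqrt_two (m := Tc.charpoly.roots) ?_ ?_ hs ?_ ?_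
  · rw [IsAlgClosed.card_roots_eq_natDegree, charpoly_natDegree_eq_dim, Fintype.card_fin]
  · intro z hz
    rw [hchar, mem_roots_map_of_injective (algebraMap ℝ ℂ).injective T.charpoly_monic.ne_zero,
      ← aeval_def] at hz ⊢
    rw [aeval_conj, hz, map_zero]
  · exact fun z hz => pow_eq_one_of_isRoot_charpoly hTc (isRoot_of_mem_roots hz)
  · rw [← trace_eq_sum_roots_charpoly, htrace, htr, Complex.ofReal_neg]

/-- There is no square-zero real `3×3` matrix `N` such that `A + N` is
torsion, where `A = ![![0,0,0],![0,0,−1],![0,1,−√2]]`. -/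
theorem counterexample_no_decomposition :
    let A : Matrix (Fin 3) (Fin 3) ℝ :=
      !![0, 0, 0; 0, 0, -1; 0, 1, -Real.sqrt 2]
    ¬ ∃ N : Matrix (Fin 3) (Fin 3) ℝ,
        N ^ 2 = 0 ∧ IsUnit (A + N) ∧ ∃ s : ℕ, 1 ≤ s ∧ (A + N) ^ s = 1 := by
  rintro A ⟨N, hN, -, s, hs, hT⟩
  refine Matrix.trace_ne_neg_sqrt_two_of_pow_eq_one (by omega) hT ?_
  rw [Matrix.trace_add, (Matrix.isNilpotent_trace_of_isNilpotent ⟨2, hN⟩).eq_zero]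
  simp [Matrix.trace_fin_three, A]
end
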